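/- Fix an agent i, items ℓ ≤ h ≤ r in M = {1,…,m}, a positive integer g, and positive integers n^L, n^R. For a profile u of monotone utility functions, define T_h(u) := { t ∈ {1,…,g} : (1/n^L)·u_i^{−(g+t)}([ℓ,h]) ≥ (1/n^R)·u_i^{−(g−t)}([h+1,r]) } and f_h(u) := max T_h(u) if T_h(u) ≠ ∅ and f_h(u) := 0 otherwise (where [a,b] denotes {a, a+1, …, b} and [h+1,r] = ∅ if h = r). Then for every pair of (agent × item)-level adjacent profiles u, ũ of monotone utility functions, |f_h(u) − f_h(ũ)| ≤ 1. -/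

import Mathlib

/-!
If `v` and `w` agree on every bundle avoiding the item `j` and `w` is monotone, then deleting
one extra item (namely `j`) from any bundle makes `v` no larger than `w`, so
`v^{-(k+1)} ≤ w^{-k}`. Hence a threshold `t + 1` satisfying the knife condition for `v` gives the
threshold `t` for `w`: the left side loses one removal, the right side gains one. Therefore
`f_h(v) ≤ f_h(w) + 1`, and the bound is symmetric in the two profiles.
-/

noncomputable def kRemoved {m : ℕ} (u : Finset (Fin m) → ℝ) (k : ℕ)
    (S : Finset (Fin m)) : ℝ :=
  ((Finset.univ : Finset (Fin m)).powerset.filter fun T => T.card ≤ k).inf'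
    ⟨∅, by simp⟩ fun T => u (S \ T)

def MonotoneProfile {n m : ℕ} (u : Fin n → Finset (Fin m) → ℝ) : Prop :=
  ∀ i : Fin n, (∀ S : Finset (Fin m), 0 ≤ u i S) ∧
    ∀ S T : Finset (Fin m), S ⊆ T → u i S ≤ u i T

def ItemAdjFn {n m : ℕ} (u u' : Fin n → Finset (Fin m) → ℝ) : Prop :=
  ∃ (iStar : Fin n) (jStar : Fin m),
    (∀ i : Fin n, i ≠ iStar → u i = u' i) ∧
    ∀ S : Finset (Fin m), jStar ∉ S → u iStar S = u' iStar S

/-- The moving-knife quality function `f_h(u)`: the largest `t ∈ [g]` such that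
`(1/n^L)·u_i^{−(g+t)}([ℓ,h]) ≥ (1/n^R)·u_i^{−(g−t)}([h+1,r])`, or `0` if no such `t`
exists.  (In `ℕ`, `sSup ∅ = 0`.) -/
noncomputable def fKnife {n m : ℕ} (i : Fin n) (l h r : Fin m) (g nL nR : ℕ)
    (u : Fin n → Finset (Fin m) → ℝ) : ℕ :=
  sSup {t : ℕ | 1 ≤ t ∧ t ≤ g ∧
    (1 / (nL : ℝ)) * kRemoved (u i) (g + t) (Finset.Icc l h) ≥
      (1 / (nR : ℝ)) * kRemoved (u i) (g - t) (Finset.Ioc h r)}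

theorem MonotoneProfile.monotone {n m : ℕ} {u : Fin n → Finset (Fin m) → ℝ}
    (hu : MonotoneProfile u) (i : Fin n) : Monotone (u i) :=
  fun S T hST => (hu i).2 S T hST

theorem ItemAdjFn.exists_eq_of_notMem {n m : ℕ} {u u' : Fin n → Finset (Fin m) → ℝ}
    (hadj : ItemAdjFn u u') (i : Fin n) :
    ∃ j : Fin m, ∀ S : Finset (Fin m), j ∉ S → u i S = u' i S := by
  obtain ⟨iStar, jStar, hother, hagree⟩ := hadj
  refine ⟨jStar, fun S hS => ?_⟩
  rcases eq_or_ne i iStar with rfl | hi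
  · exact hagree S hS
  · rw [hother i hi]

theorem kRemoved_succ_le_of_eq_of_notMem {m : ℕ} {v w : Finset (Fin m) → ℝ} {j : Fin m}
    (hvw : ∀ S, j ∉ S → v S = w S) (hw : Monotone w) (k : ℕ) (S : Finset (Fin m)) :
    kRemoved v (k + 1) S ≤ kRemoved w k S := by
  refine Finset.le_inf' _ _ fun T hT => ?_
  have hT' : T.card ≤ k := (Finset.mem_filter.mp hT).2
  have hjT : insert j T ∈ (Finset.univ : Finset (Fin m)).powerset.filter
      fun T => T.card ≤ k + 1 :=
    Finset.mem_filter.mpr ⟨Finset.mem_powerset.mpr (Finset.subset_univ _),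
      (Finset.card_insert_le _ _).trans (Nat.succ_le_succ hT')⟩
  have hsdiff : S \ insert j T = (S \ T).erase j := by
    rw [Finset.sdiff_insert]
  calc kRemoved v (k + 1) S ≤ v (S \ insert j T) := Finset.inf'_le _ hjT
    _ = w ((S \ T).erase j) := by rw [hsdiff, hvw _ (Finset.notMem_erase _ _)]
    _ ≤ w (S \ T) := hw (Finset.erase_subset _ _)

theorem knife_condition_of_succ {m : ℕ} {v w : Finset (Fin m) → ℝ} {j : Fin m}
    (hvw : ∀ S, j ∉ S → v S = w S) (hv : Monotone v) (hw : Monotone w)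
    (l h r : Fin m) {g : ℕ} (nL nR : ℕ) {t : ℕ} (htg : t + 1 ≤ g)
    (hcond : (1 / (nL : ℝ)) * kRemoved v (g + (t + 1)) (Finset.Icc l h) ≥
      (1 / (nR : ℝ)) * kRemoved v (g - (t + 1)) (Finset.Ioc h r)) :
    (1 / (nL : ℝ)) * kRemoved w (g + t) (Finset.Icc l h) ≥
      (1 / (nR : ℝ)) * kRemoved w (g - t) (Finset.Ioc h r) := by
  have hleft : kRemoved v (g + t + 1) (Finset.Icc l h) ≤ kRemoved w (g + t) (Finset.Icc l h) :=
    kRemoved_succ_le_of_eq_of_notMem hvw hw _ _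
  have hright : kRemoved w (g - (t + 1) + 1) (Finset.Ioc h r) ≤
      kRemoved v (g - (t + 1)) (Finset.Ioc h r) :=
    kRemoved_succ_le_of_eq_of_notMem (fun S hS => (hvw S hS).symm) hv _ _
  rw [show g - (t + 1) + 1 = g - t by omega] at hright
  calc (1 / (nR : ℝ)) * kRemoved w (g - t) (Finset.Ioc h r)
      ≤ (1 / (nR : ℝ)) * kRemoved v (g - (t + 1)) (Finset.Ioc h r) := by gcongr
    _ ≤ (1 / (nL : ℝ)) * kRemoved v (g + (t + 1)) (Finset.Icc l h) := hcond
    _ ≤ (1 / (nL : ℝ)) * kRemoved w (g + t) (Finset.Icc l h) := by gcongr; exact hleft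

theorem Nat.sSup_le_sSup_add_one_of_succ_mem {A B : Set ℕ} (hA : BddAbove A) (hB : BddAbove B)
    (hstep : ∀ t, t + 1 ∈ A → 1 ≤ t → t ∈ B) :
    sSup A ≤ sSup B + 1 := by
  rcases A.eq_empty_or_nonempty with rfl | hne
  · simp
  obtain hle | hlt := le_or_gt (sSup A) 1
  · omega
  obtain ⟨t, ht⟩ : ∃ t, sSup A = t + 1 := ⟨sSup A - 1, by omega⟩
  have htB : t ∈ B := hstep t (ht ▸ Nat.sSup_mem hne hA) (by omega)
  have := le_csSup hB htB
  omega

theorem fKnife_le_add_one_of_eq_of_notMem {n m : ℕ} {u u' : Fin n → Finset (Fin m) → ℝ}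
    {i : Fin n} {j : Fin m} (hagree : ∀ S, j ∉ S → u i S = u' i S)
    (hu : Monotone (u i)) (hu' : Monotone (u' i)) (l h r : Fin m) (g nL nR : ℕ) :
    fKnife i l h r g nL nR u ≤ fKnife i l h r g nL nR u' + 1 :=
  Nat.sSup_le_sSup_add_one_of_succ_mem ⟨g, fun _ ht => ht.2.1⟩ ⟨g, fun _ ht => ht.2.1⟩
    fun _ ⟨_, htg, hcond⟩ ht1 =>
      ⟨ht1, by omega, knife_condition_of_succ hagree hu hu' l h r nL nR htg hcond⟩

theorem fKnife_sensitivity_general (n m : ℕ) (i : Fin n) (l h r : Fin m)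
    (g : ℕ) (nL nR : ℕ)
    (u utilde : Fin n → Finset (Fin m) → ℝ)
    (hu : MonotoneProfile u) (hut : MonotoneProfile utilde)
    (hadj : ItemAdjFn u utilde) :
    |(fKnife i l h r g nL nR u : ℤ) - (fKnife i l h r g nL nR utilde : ℤ)| ≤ 1 := by
  obtain ⟨j, hj⟩ := hadj.exists_eq_of_notMem i
  have h₁ := fKnife_le_add_one_of_eq_of_notMem hj (hu.monotone i) (hut.monotone i) l h r g nL nR
  have h₂ := fKnife_le_add_one_of_eq_of_notMem (fun S hS => (hj S hS).symm)
    (hut.monotone i) (hu.monotone i) l h r g nL nR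
  rw [abs_le]
  omega

theorem fKnife_sensitivity (n m : ℕ) (i : Fin n) (l h r : Fin m)
    (hlh : l ≤ h) (hhr : h ≤ r) (g : ℕ) (hg : 1 ≤ g)
    (nL nR : ℕ) (hnL : 1 ≤ nL) (hnR : 1 ≤ nR)
    (u utilde : Fin n → Finset (Fin m) → ℝ)
    (hu : MonotoneProfile u) (hut : MonotoneProfile utilde)
    (hadj : ItemAdjFn u utilde) :
    |(fKnife i l h r g nL nR u : ℤ) - (fKnife i l h r g nL nR utilde : ℤ)| ≤ 1 :=
  fKnife_sensitivity_general n m i l h r g nL nR u utilde hu hut hadj
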